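/- arXiv:1202.3808 — 8 statements merged into one kernel-verified Lean document; each statement's English description precedes it below -/
import Mathlib

section
/- There are no positive integers x, y such that x⁴ - 4y⁴ is a positive perfect square. -/
/-- `(x⁴ - 4y⁴)² + (2xy)⁴ = (x⁴ + 4y⁴)²`, so a square `z² = x⁴ - 4y⁴` gives `z⁴ + (2xy)⁴ = □`,
which Fermat's descent for `a⁴ + b⁴ = c²` rules out. -/
theorem stmt_8 : ¬ ∃ x y z : ℤ, 0 < x ∧ 0 < y ∧ 0 < z ∧ x ^ 4 - 4 * y ^ 4 = z ^ 2 := by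
  rintro ⟨x, y, z, hx, hy, hz, h⟩
  refine not_fermat_42 hz.ne' (b := 2 * x * y) (by positivity) (c := x ^ 4 + 4 * y ^ 4) ?_
  linear_combination (z ^ 2 + x ^ 4 - 4 * y ^ 4) * h.symm
end

section
/- For positive integers a, b, the product a·b·(a² + b²) is never a perfect square. -/
/-!
After dividing out `gcd a b` we may assume `a` and `b` coprime. Then `a`, `b` and `a² + b²` are
pairwise coprime, so each of them is a square: `a = u²`, `b = v²` and `u⁴ + v⁴ = a² + b²` is a
square, which Fermat's descent for `x⁴ + y⁴ = z²` rules out.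
-/

namespace Nat

theorem isSquare_of_isSquare_sq_mul {g n : ℕ} (hg : g ≠ 0) (h : IsSquare (g ^ 2 * n)) :
    IsSquare n := by
  obtain ⟨c, hc⟩ := (isSquare_iff_exists_sq _).mp h
  obtain ⟨d, rfl⟩ : g ∣ c := (Nat.pow_dvd_pow_iff two_ne_zero).mp ⟨n, hc.symm⟩
  refine (isSquare_iff_exists_sq _).mpr ⟨d, ?_⟩
  apply Nat.eq_of_mul_eq_mul_left (pow_pos (Nat.pos_of_ne_zero hg) 2)
  rw [hc]
  ring

theorem Coprime.isSquare_left_of_isSquare_mul {a b : ℕ} (hab : a.Coprime b)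
    (h : IsSquare (a * b)) : IsSquare a := by
  obtain ⟨c, hc⟩ := (isSquare_iff_exists_sq _).mp h
  obtain ⟨d, hd⟩ := exists_eq_pow_of_mul_eq_pow (Nat.isUnit_iff.mpr hab) hc
  exact (isSquare_iff_exists_sq _).mpr ⟨d, hd⟩

theorem Coprime.isSquare_right_of_isSquare_mul {a b : ℕ} (hab : a.Coprime b)
    (h : IsSquare (a * b)) : IsSquare b :=
  hab.symm.isSquare_left_of_isSquare_mul (mul_comm a b ▸ h)

theorem Coprime.coprime_mul_sq_add_sq {a b : ℕ} (hab : a.Coprime b) :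
    (a * b).Coprime (a ^ 2 + b ^ 2) := by
  have ha : a.Coprime (a ^ 2 + b ^ 2) := by
    rw [add_comm, sq a, Nat.coprime_add_mul_right_right]
    exact hab.pow_right 2
  have hb : b.Coprime (a ^ 2 + b ^ 2) := by
    rw [sq b, Nat.coprime_add_mul_right_right]
    exact hab.symm.pow_right 2
  exact ha.mul_left hb

theorem not_isSquare_pow_four_add_pow_four {u v : ℕ} (hu : u ≠ 0) (hv : v ≠ 0) :
    ¬IsSquare (u ^ 4 + v ^ 4) := by
  rw [isSquare_iff_exists_sq]
  rintro ⟨e, he⟩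
  exact not_fermat_42 (c := e) (Int.natCast_ne_zero.mpr hu) (Int.natCast_ne_zero.mpr hv)
    (by exact_mod_cast he)

theorem Coprime.not_isSquare_mul_mul_sq_add_sq {a b : ℕ} (hab : a.Coprime b) (ha : a ≠ 0)
    (hb : b ≠ 0) : ¬IsSquare (a * b * (a ^ 2 + b ^ 2)) := by
  intro h
  have hcop := hab.coprime_mul_sq_add_sq
  have hprod := hcop.isSquare_left_of_isSquare_mul h
  obtain ⟨u, rfl⟩ := (isSquare_iff_exists_sq _).mp (hab.isSquare_left_of_isSquare_mul hprod)
  obtain ⟨v, rfl⟩ := (isSquare_iff_exists_sq _).mp (hab.isSquare_right_of_isSquare_mul hprod)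
  refine not_isSquare_pow_four_add_pow_four (ne_zero_pow two_ne_zero ha)
    (ne_zero_pow two_ne_zero hb) ?_
  convert hcop.isSquare_right_of_isSquare_mul h using 1
  ring

end Nat

theorem stmt_9 (a b : ℕ) (ha : 0 < a) (hb : 0 < b) :
    ¬ IsSquare (a * b * (a ^ 2 + b ^ 2)) := by
  intro h
  obtain ⟨g, a', b', hg, hcop, rfl, rfl⟩ := Nat.exists_coprime' (Nat.gcd_pos_of_pos_left b ha)
  refine hcop.not_isSquare_mul_mul_sq_add_sq (by rintro rfl; simp at ha)
    (by rintro rfl; simp at hb) ?_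
  refine Nat.isSquare_of_isSquare_sq_mul (g := g ^ 2) (by positivity) ?_
  convert h using 1
  ring
end

section
/- If a and b are positive integers with a ≠ b, then a⁴ - b⁴ is not a perfect square (assuming a > b). -/
/-!
Fermat's descent. After dividing out `gcd x y`, a solution of `x⁴ - y⁴ = z²` with `y, z ≠ 0`
yields one with smaller `|x|`, via the parametrization of primitive Pythagorean triples.
If `y` is odd, `(y², z, x²)` is primitive, so `y² = m² - n²` and `x² = m² + n²`, and then
`m⁴ - n⁴ = (xy)²`. If `y` is even, `(z, y², x²)` is primitive, so `y² = 2mn` and `x² = m² + n²`;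
parametrizing the triple `(m, n, x)` in turn gives `x = p² + q²` with `pq(p² - q²)` a square.
Its three factors are pairwise coprime, so `p = r²`, `q = s²`, `p² - q² = w²` and `r⁴ - s⁴ = w²`.
-/

theorem Int.sq_of_isCoprime_of_pos {a b c : ℤ} (h : IsCoprime a b) (heq : a * b = c ^ 2)
    (ha : 0 < a) : ∃ u : ℤ, a = u ^ 2 := by
  obtain ⟨u, hu | hu⟩ := Int.sq_of_isCoprime h heq
  · exact ⟨u, hu⟩
  · nlinarith [sq_nonneg u]

theorem Int.isCoprime_of_pow_four_sub_pow_four_eq_sq {x y z : ℤ} (hxy : IsCoprime x y)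
    (h : x ^ 4 - y ^ 4 = z ^ 2) : IsCoprime y z := by
  have : IsCoprime y (z ^ 2) := by
    rw [← h, show x ^ 4 - y ^ 4 = x ^ 4 + y * -y ^ 3 by ring]
    exact hxy.symm.pow_right.add_mul_left_right _
  exact (IsCoprime.pow_right_iff two_pos).mp this

def Fermat42Sub (x y z : ℤ) : Prop :=
  y ≠ 0 ∧ z ≠ 0 ∧ x ^ 4 - y ^ 4 = z ^ 2

namespace Fermat42Sub

theorem exists_isCoprime {x y z : ℤ} (h : Fermat42Sub x y z) :
    ∃ x' y' z', Fermat42Sub x' y' z' ∧ IsCoprime x' y' ∧ x'.natAbs ≤ x.natAbs := by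
  obtain ⟨hy, hz, hxyz⟩ := h
  obtain ⟨g, x', y', hg, hcop, rfl, rfl⟩ :=
    Int.exists_gcd_one' (Int.gcd_pos_of_ne_zero_right x hy)
  have hdvd : ((g : ℤ) ^ 2) ^ 2 ∣ z ^ 2 := ⟨x' ^ 4 - y' ^ 4, by rw [← hxyz]; ring⟩
  obtain ⟨z', rfl⟩ := (Int.pow_dvd_pow_iff two_ne_zero).mp hdvd
  have hg4 : (g : ℤ) ^ 4 ≠ 0 := by positivity
  refine ⟨x', y', z', ⟨left_ne_zero_of_mul hy, right_ne_zero_of_mul hz, ?_⟩,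
    Int.isCoprime_iff_gcd_eq_one.mpr hcop, ?_⟩
  · exact mul_left_cancel₀ hg4 (by linear_combination hxyz)
  · rw [Int.natAbs_mul, Int.natAbs_natCast]
    exact Nat.le_mul_of_pos_right _ hg

theorem exists_smaller_of_odd {x y z : ℤ} (h : Fermat42Sub x y z) (hxy : IsCoprime x y)
    (hy : Odd y) : ∃ x' y' z', Fermat42Sub x' y' z' ∧ x'.natAbs < x.natAbs := by
  obtain ⟨hy0, hz0, hxyz⟩ := h
  have htriple : PythagoreanTriple (y ^ 2) z (x ^ 2) := by
    unfold PythagoreanTriple; linear_combination -hxyz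
  have hcop : Int.gcd (y ^ 2) z = 1 := Int.isCoprime_iff_gcd_eq_one.mp
    (Int.isCoprime_of_pow_four_sub_pow_four_eq_sq hxy hxyz).pow_left
  have hx0 : x ≠ 0 := by rintro rfl; nlinarith [pow_pos (sq_pos_of_ne_zero hy0) 2]
  obtain ⟨m, n, hy2, hz, hx2, -, -, -⟩ :=
    htriple.coprime_classification' hcop (Int.odd_iff.mp hy.pow) (by positivity)
  have hn0 : n ≠ 0 := by rintro rfl; simp [hz0] at hz
  refine ⟨m, n, x * y, ⟨hn0, mul_ne_zero hx0 hy0, ?_⟩, Int.natAbs_lt_iff_sq_lt.mpr ?_⟩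
  · linear_combination (-x ^ 2) * hy2 - (m ^ 2 - n ^ 2) * hx2
  · nlinarith [sq_pos_of_ne_zero hn0]

theorem exists_of_mul_mul_sq_sub_sq_eq_sq {p q v : ℤ} (hq : 0 < q) (hqp : q < p)
    (hpq : IsCoprime p q) (h : p * q * (p ^ 2 - q ^ 2) = v ^ 2) :
    ∃ r s w, Fermat42Sub r s w ∧ r ^ 2 = p := by
  have hd : 0 < p ^ 2 - q ^ 2 := by nlinarith
  have hp' : IsCoprime p (p ^ 2 - q ^ 2) := by
    simpa [sq, sub_eq_neg_add] using (hpq.pow_right (n := 2)).neg_right.add_mul_left_right p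
  have hq' : IsCoprime q (p ^ 2 - q ^ 2) := by
    simpa [sq, sub_eq_add_neg] using (hpq.symm.pow_right (n := 2)).add_mul_left_right (-q)
  obtain ⟨r, rfl⟩ := Int.sq_of_isCoprime_of_pos (c := v) (hpq.mul_right hp')
    (by linear_combination h) (by linarith)
  obtain ⟨s, rfl⟩ := Int.sq_of_isCoprime_of_pos (c := v) (hpq.symm.mul_right hq')
    (by linear_combination h) hq
  obtain ⟨w, hw⟩ := Int.sq_of_isCoprime_of_pos (c := v) (hp'.symm.mul_right hq'.symm)
    (by linear_combination h) hd
  refine ⟨r, s, w, ⟨?_, ?_, by linear_combination hw⟩, rfl⟩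
  · rintro rfl; simp at hq
  · rintro rfl; simp [hw] at hd

theorem exists_smaller_of_sq_add_sq {m n x v : ℤ} (hm : 0 < m) (hn : 0 < n)
    (hnm : Int.gcd n m = 1) (hodd : n % 2 = 1) (hx : x ^ 2 = n ^ 2 + m ^ 2)
    (hv : m * n = 2 * v ^ 2) : ∃ r s w, Fermat42Sub r s w ∧ r.natAbs < x.natAbs := by
  have htriple : PythagoreanTriple n m |x| := by
    unfold PythagoreanTriple; rw [abs_mul_abs_self]; linear_combination -hx
  have hx0 : 0 < |x| := abs_pos.mpr (by rintro rfl; nlinarith)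
  obtain ⟨p, q, rfl, rfl, hx', hpq, -, hp₀⟩ := htriple.coprime_classification' hnm hodd hx0
  have hp : 0 < p := hp₀.lt_of_ne (by rintro rfl; simp at hm)
  have hq : 0 < q := by nlinarith
  have hqp : q < p := by nlinarith
  obtain ⟨r, s, w, hsol, rfl⟩ := exists_of_mul_mul_sq_sub_sq_eq_sq hq hqp
    (Int.isCoprime_iff_gcd_eq_one.mpr hpq) (v := v) (by linarith)
  refine ⟨r, s, w, hsol, Int.natAbs_lt_iff_sq_lt.mpr ?_⟩
  rw [← sq_abs x, hx']
  nlinarith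

theorem exists_smaller_of_even {x y z : ℤ} (h : Fermat42Sub x y z) (hxy : IsCoprime x y)
    (hy : Even y) : ∃ x' y' z', Fermat42Sub x' y' z' ∧ x'.natAbs < x.natAbs := by
  obtain ⟨hy0, hz0, hxyz⟩ := h
  obtain ⟨v, rfl⟩ := hy
  have hx : Odd x :=
    Int.isCoprime_two_right.mp (IsCoprime.of_mul_right_left (z := v) (by rwa [two_mul]))
  have hx0 : x ≠ 0 := by rintro rfl; simp at hx
  have hz : Odd z := by
    have : Odd (z ^ 2) := by
      rw [← hxyz]; exact hx.pow.sub_even ((Int.even_pow' four_ne_zero).mpr ⟨v, rfl⟩)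
    exact (Int.odd_pow' two_ne_zero).mp this
  have htriple : PythagoreanTriple z ((v + v) ^ 2) (x ^ 2) := by
    unfold PythagoreanTriple; linear_combination -hxyz
  have hcop : Int.gcd z ((v + v) ^ 2) = 1 := Int.isCoprime_iff_gcd_eq_one.mp
    (Int.isCoprime_of_pow_four_sub_pow_four_eq_sq hxy hxyz).symm.pow_right
  obtain ⟨m, n, -, hy2, hx2, hmn, hpar, hm₀⟩ :=
    htriple.coprime_classification' hcop (Int.odd_iff.mp hz) (by positivity)
  have hmnv : m * n = 2 * v ^ 2 := by linarith
  have hmnpos : 0 < m * n := by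
    rw [hmnv]; have : v ≠ 0 := by rintro rfl; simp at hy0
    positivity
  have hm : 0 < m := hm₀.lt_of_ne (by rintro rfl; simp at hmnpos)
  have hn : 0 < n := pos_of_mul_pos_right hmnpos hm.le
  rcases hpar with ⟨-, hn2⟩ | ⟨hm2, -⟩
  · exact exists_smaller_of_sq_add_sq hm hn (by rwa [Int.gcd_comm]) hn2 (by linarith) hmnv
  · exact exists_smaller_of_sq_add_sq hn hm hmn hm2 (by linarith) (by rwa [mul_comm])

theorem exists_smaller {x y z : ℤ} (h : Fermat42Sub x y z) :
    ∃ x' y' z', Fermat42Sub x' y' z' ∧ x'.natAbs < x.natAbs := by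
  obtain ⟨x₁, y₁, z₁, h₁, hcop, hle⟩ := h.exists_isCoprime
  obtain ⟨x₂, y₂, z₂, h₂, hlt⟩ : ∃ x₂ y₂ z₂, Fermat42Sub x₂ y₂ z₂ ∧ x₂.natAbs < x₁.natAbs := by
    rcases Int.even_or_odd y₁ with hy | hy
    · exact h₁.exists_smaller_of_even hcop hy
    · exact h₁.exists_smaller_of_odd hcop hy
  exact ⟨x₂, y₂, z₂, h₂, hlt.trans_le hle⟩

end Fermat42Sub

theorem not_fermat42Sub (x y z : ℤ) : ¬Fermat42Sub x y z := fun h => by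
  obtain ⟨x', y', z', h', hlt⟩ := h.exists_smaller
  exact not_fermat42Sub x' y' z' h'
termination_by x.natAbs

theorem stmt_10 (a b : ℤ) (hb : 0 < b) (hab : b < a) :
    ¬ ∃ c : ℤ, a ^ 4 - b ^ 4 = c ^ 2 := by
  rintro ⟨c, hc⟩
  have hc0 : c ≠ 0 := by
    rintro rfl
    have : b ^ 4 < a ^ 4 := pow_lt_pow_left₀ hab hb.le (by norm_num)
    linarith
  exact not_fermat42Sub a b c ⟨hb.ne', hc0, hc⟩
end

section
/- For distinct positive integers a, b with a > b, the product a·b·(a² - b²) is never a perfect square. -/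
/-!
Fermat's infinite descent on `c`. Dividing `a` and `b` by their gcd `g` divides `c` by `g²`, and
replacing them by `(a + b) / 2` and `(a - b) / 2` when `a + b` is even halves `c`. Otherwise the
factors `a`, `b`, `a + b`, `a - b` of `c²` are pairwise coprime, hence squares `p²`, `q²`, `r²`,
`s²`. Then `u = (r + s) / 2` and `v = (r - s) / 2` are the legs of a primitive Pythagorean
triangle with hypotenuse `p` and area `uv / 2 = (q / 2)²`, and Euclid's parametrization
`u = m² - n²`, `v = 2mn` yields a new solution `mn(m² - n²) = (q / 2)²` with `q / 2 < c`.
-/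

/-- `a * b * (a ^ 2 - b ^ 2)` is the area of the Pythagorean triangle with legs `a ^ 2 - b ^ 2`
and `2 * a * b`. -/
def HasSquareArea (a b c : ℤ) : Prop :=
  0 < b ∧ b < a ∧ a * b * (a ^ 2 - b ^ 2) = c ^ 2

theorem Int.exists_pos_sq_of_isCoprime_of_mul_eq_sq {x y c : ℤ} (hxy : IsCoprime x y)
    (h : x * y = c ^ 2) (hx : 0 < x) : ∃ p, 0 < p ∧ x = p ^ 2 := by
  obtain ⟨p, rfl | rfl⟩ := Int.sq_of_isCoprime hxy h
  · exact ⟨|p|, abs_pos.mpr (by rintro rfl; simp at hx), (sq_abs p).symm⟩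
  · nlinarith [sq_nonneg p]

theorem Int.exists_eq_mul_of_sq_eq_sq_mul {k c N : ℤ} (hk : k ≠ 0) (h : c ^ 2 = k ^ 2 * N) :
    ∃ c₀, c = k * c₀ ∧ N = c₀ ^ 2 := by
  obtain ⟨c₀, rfl⟩ := (Int.pow_dvd_pow_iff two_ne_zero).mp ⟨N, h⟩
  refine ⟨c₀, rfl, mul_left_cancel₀ (pow_ne_zero 2 hk) ?_⟩
  linear_combination -h

theorem PythagoreanTriple.exists_hasSquareArea {u v p w : ℤ} (h : PythagoreanTriple u v p)
    (huv : IsCoprime u v) (hu : 0 < u) (hv : 0 < v) (hp : 0 < p) (harea : u * v = 2 * w ^ 2) :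
    ∃ m n, HasSquareArea m n w := by
  wlog hu_odd : Odd u generalizing u v
  · have hv_odd : Odd v := Int.isCoprime_two_left.mp <|
      huv.of_isCoprime_of_dvd_left (Int.not_odd_iff_even.mp hu_odd).two_dvd
    exact this h.symm huv.symm hv hu (by rwa [mul_comm]) hv_odd
  obtain ⟨m, n, rfl, rfl, -, -, -, hm⟩ := h.coprime_classification'
    (Int.isCoprime_iff_gcd_eq_one.mp huv) (Int.odd_iff.mp hu_odd) hp
  have hm : 0 < m := hm.lt_of_ne (by rintro rfl; simp at hv)
  have hn : 0 < n := pos_of_mul_pos_right hv (by positivity)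
  refine ⟨m, n, hn, by nlinarith, mul_left_cancel₀ two_ne_zero ?_⟩
  linear_combination harea

namespace HasSquareArea

variable {a b c : ℤ}

theorem ne_zero (h : HasSquareArea a b c) : c ≠ 0 := by
  obtain ⟨hb, hba, hc⟩ := h
  have : 0 < a ^ 2 - b ^ 2 := by nlinarith
  have : 0 < c ^ 2 := hc ▸ mul_pos (mul_pos (hb.trans hba) hb) this
  rintro rfl
  simp at this

theorem le_sq (h : HasSquareArea a b c) : b ≤ c ^ 2 := by
  obtain ⟨hb, hba, hc⟩ := h
  have : 1 ≤ a ^ 2 - b ^ 2 := by nlinarith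
  rw [← hc]
  nlinarith [mul_le_mul_of_nonneg_left this (mul_pos (hb.trans hba) hb).le]

theorem natAbs_lt_of_eq_mul {k c₀ : ℤ} (h : HasSquareArea a b c₀) (hk : 2 ≤ k.natAbs)
    (hc : c = k * c₀) : c₀.natAbs < c.natAbs := by
  rw [hc, Int.natAbs_mul]
  exact lt_mul_left (Int.natAbs_pos.mpr h.ne_zero) hk

theorem of_mul {k : ℤ} (hk : 0 < k) (h : HasSquareArea (k * a) (k * b) c) :
    ∃ c₀, c = k ^ 2 * c₀ ∧ HasSquareArea a b c₀ := by
  obtain ⟨hb, hba, hc⟩ := h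
  obtain ⟨c₀, rfl, hc₀⟩ :=
    Int.exists_eq_mul_of_sq_eq_sq_mul (k := k ^ 2) (c := c) (N := a * b * (a ^ 2 - b ^ 2))
      (by positivity) (by linear_combination -hc)
  exact ⟨c₀, rfl, pos_of_mul_pos_right hb hk.le, lt_of_mul_lt_mul_left hba hk.le, hc₀⟩

theorem half {u v : ℤ} (h : HasSquareArea (u + v) (u - v) c) :
    ∃ c₀, c = 2 * c₀ ∧ HasSquareArea u v c₀ := by
  obtain ⟨hb, hba, hc⟩ := h
  obtain ⟨c₀, rfl, hc₀⟩ :=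
    Int.exists_eq_mul_of_sq_eq_sq_mul (k := 2) (c := c) (N := u * v * (u ^ 2 - v ^ 2))
      two_ne_zero (by linear_combination -hc)
  exact ⟨c₀, rfl, by linarith, by linarith, hc₀⟩

theorem exists_sq_of_isCoprime (h : HasSquareArea a b c) (hab : IsCoprime a b)
    (hodd : Odd (a + b)) : ∃ p q r s : ℤ, 0 < p ∧ 0 < r ∧ 0 < s ∧
      IsCoprime r s ∧ a = p ^ 2 ∧ b = q ^ 2 ∧ a + b = r ^ 2 ∧ a - b = s ^ 2 := by
  obtain ⟨hb, hba, hc⟩ := h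
  have h₁ : IsCoprime a (a + b) := by simpa using hab.mul_add_left_right 1
  have h₂ : IsCoprime a (a - b) := by
    simpa [sub_eq_add_neg] using hab.neg_right.mul_add_left_right 1
  have h₃ : IsCoprime b (a + b) := by simpa using hab.symm.add_mul_left_right 1
  have h₄ : IsCoprime b (a - b) := by
    simpa [sub_eq_add_neg] using hab.symm.add_mul_left_right (-1)
  have h₅ : IsCoprime (a + b) (a - b) := by
    have : IsCoprime (a + b) (2 * b) := (Int.isCoprime_two_right.mpr hodd).mul_right h₃.symm
    rw [show a - b = (a + b) * 1 + -(2 * b) by ring]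
    exact this.neg_right.mul_add_left_right 1
  obtain ⟨p, hp, rfl⟩ := Int.exists_pos_sq_of_isCoprime_of_mul_eq_sq
    (hab.mul_right (h₁.mul_right h₂)) (c := c) (by linear_combination hc) (hb.trans hba)
  obtain ⟨q, -, rfl⟩ := Int.exists_pos_sq_of_isCoprime_of_mul_eq_sq
    (hab.symm.mul_right (h₃.mul_right h₄)) (c := c) (by linear_combination hc) hb
  obtain ⟨r, hr, hpr⟩ := Int.exists_pos_sq_of_isCoprime_of_mul_eq_sq
    (h₁.symm.mul_right (h₃.symm.mul_right h₅)) (c := c) (by linear_combination hc)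
    (by linarith)
  obtain ⟨s, hs, hps⟩ := Int.exists_pos_sq_of_isCoprime_of_mul_eq_sq
    (h₂.symm.mul_right (h₄.symm.mul_right h₅.symm)) (c := c) (by linear_combination hc)
    (by linarith)
  refine ⟨p, q, r, s, hp, hr, hs, ?_, rfl, rfl, hpr, hps⟩
  rw [hpr, hps] at h₅
  exact (IsCoprime.pow_iff two_pos two_pos).mp h₅

theorem exists_lt_of_isCoprime (h : HasSquareArea a b c) (hab : IsCoprime a b)
    (hodd : Odd (a + b)) : ∃ a' b' c', HasSquareArea a' b' c' ∧ c'.natAbs < c.natAbs := by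
  obtain ⟨p, q, r, s, hp, hr, hs, hrs, rfl, rfl, hpr, hps⟩ := h.exists_sq_of_isCoprime hab hodd
  have hr_odd : Odd r := (Int.odd_pow' two_ne_zero).mp (hpr ▸ hodd)
  have hs_odd : Odd s := by
    refine (Int.odd_pow' two_ne_zero).mp (hps ▸ ?_)
    rw [show p ^ 2 - q ^ 2 = p ^ 2 + q ^ 2 - 2 * q ^ 2 by ring]
    exact hodd.sub_even (even_two_mul _)
  obtain ⟨u, hu⟩ := hr_odd.add_odd hs_odd
  obtain ⟨v, hv⟩ := hr_odd.sub_odd hs_odd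
  obtain ⟨rfl, rfl⟩ : r = u + v ∧ s = u - v := by omega
  have huv : IsCoprime u v := by
    obtain ⟨α, β, hαβ⟩ := hrs
    exact ⟨α + β, α - β, by linear_combination hαβ⟩
  have hq : q ^ 2 = 2 * (u * v) := by linarith
  obtain ⟨w, rfl⟩ := (Int.even_pow.mp ⟨u * v, by rw [hq]; ring⟩).1
  have hpyth : PythagoreanTriple u v p := by unfold PythagoreanTriple; linarith
  have hv : 0 < v := by nlinarith [h.1]
  obtain ⟨m, n, hmn⟩ := hpyth.exists_hasSquareArea huv (by linarith) hv hp (by linarith)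
  refine ⟨m, n, w, hmn, Int.natAbs_lt_iff_sq_lt.mpr ?_⟩
  have hw : 0 < w ^ 2 := by nlinarith [h.1]
  nlinarith [h.le_sq]

theorem exists_lt (h : HasSquareArea a b c) :
    ∃ a' b' c', HasSquareArea a' b' c' ∧ c'.natAbs < c.natAbs := by
  rcases Int.even_or_odd (a + b) with ⟨u, hu⟩ | hodd
  · obtain ⟨c₀, hc, h₀⟩ := half (u := u) (v := a - u)
      (by rwa [add_sub_cancel, show u - (a - u) = b by omega])
    exact ⟨u, a - u, c₀, h₀, h₀.natAbs_lt_of_eq_mul (by decide) hc⟩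
  by_cases hab : IsCoprime a b
  · exact h.exists_lt_of_isCoprime hab hodd
  obtain ⟨a₀, ha⟩ := Int.gcd_dvd_left a b
  obtain ⟨b₀, hb⟩ := Int.gcd_dvd_right a b
  have hg : 2 ≤ a.gcd b := by
    have : a.gcd b ≠ 0 := fun h₀ => h.1.ne' (Int.gcd_eq_zero_iff.mp h₀).2
    have : a.gcd b ≠ 1 := mt Int.isCoprime_iff_gcd_eq_one.mpr hab
    omega
  have h' : HasSquareArea (a.gcd b * a₀) (a.gcd b * b₀) c := by rwa [← ha, ← hb]
  obtain ⟨c₀, hc, h₀⟩ := of_mul (by omega) h'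
  refine ⟨a₀, b₀, c₀, h₀, h₀.natAbs_lt_of_eq_mul ?_ hc⟩
  rw [Int.natAbs_pow, Int.natAbs_natCast]
  nlinarith

end HasSquareArea

theorem not_hasSquareArea (a b c : ℤ) : ¬HasSquareArea a b c := by
  induction hn : c.natAbs using Nat.strong_induction_on generalizing a b c with
  | _ n ih =>
    intro h
    obtain ⟨a', b', c', h', hlt⟩ := h.exists_lt
    exact ih _ (hn ▸ hlt) a' b' c' rfl h'

theorem stmt_11 (a b : ℤ) (hb : 0 < b) (hab : b < a) :
    ¬ IsSquare (a * b * (a ^ 2 - b ^ 2)) := by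
  rintro ⟨c, hc⟩
  exact not_hasSquareArea a b c ⟨hb, hab, by rw [hc, sq]⟩
end

section
/- There are no positive integers x, y with 4x⁴ + y⁴ a perfect square. -/
/-!
Infinite descent on `z` in `4x⁴ + y⁴ = z²`. A common factor of `x, y` can be divided out, and if
`y = 2y'` then `x⁴ + 4y'⁴ = (z/2)²` is a smaller solution with the roles swapped. Otherwise
`(y², 2x², z)` is a primitive Pythagorean triple: `x² = mn` and `z = m² + n²` with `m = u²`,
`n = v²` coprime, so `y² + v⁴ = u⁴`. The primitive triple `(y, v², u²)` gives coprime `s, t` with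
`st = 2(v/2)²`, hence `{s, t} = {2a², b²}` and `u² = s² + t² = 4a⁴ + b⁴`, with `u² < z`.
-/

theorem Int.exists_sq_of_isCoprime_of_nonneg {a b c : ℤ} (h : IsCoprime a b) (ha : 0 ≤ a)
    (heq : a * b = c ^ 2) : ∃ u, a = u ^ 2 := by
  obtain ⟨u, hu | hu⟩ := Int.sq_of_isCoprime h heq
  · exact ⟨u, hu⟩
  · exact ⟨0, by nlinarith [sq_nonneg u]⟩

theorem Int.natAbs_lt_natAbs_mul {k c : ℤ} (hk : 2 ≤ k.natAbs) (hc : c ≠ 0) :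
    c.natAbs < (k * c).natAbs := by
  rw [Int.natAbs_mul]
  have := Int.natAbs_pos.mpr hc
  nlinarith

namespace QuarticDescent

def Solvable (z : ℤ) : Prop :=
  ∃ x y : ℤ, x ≠ 0 ∧ y ≠ 0 ∧ 4 * x ^ 4 + y ^ 4 = z ^ 2

theorem Solvable.ne_zero {z : ℤ} (hz : Solvable z) : z ≠ 0 := by
  obtain ⟨x, y, hx, hy, h⟩ := hz
  rintro rfl
  have : 0 < 4 * x ^ 4 + y ^ 4 := by positivity
  simp_all

theorem exists_smaller_of_not_isCoprime {x y z : ℤ} (hx : x ≠ 0) (hy : y ≠ 0)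
    (hxy : ¬IsCoprime x y) (h : 4 * x ^ 4 + y ^ 4 = z ^ 2) :
    ∃ c, Solvable c ∧ c.natAbs < z.natAbs := by
  have hg : 2 ≤ (Int.gcd x y : ℤ).natAbs := by
    have h0 : Int.gcd x y ≠ 0 := fun h0 => hx (Int.gcd_eq_zero_iff.mp h0).1
    have h1 : Int.gcd x y ≠ 1 := fun h1 => hxy (Int.isCoprime_iff_gcd_eq_one.mpr h1)
    rw [Int.natAbs_natCast]
    omega
  obtain ⟨x', hx'⟩ := Int.gcd_dvd_left x y
  obtain ⟨y', hy'⟩ := Int.gcd_dvd_right x y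
  generalize (Int.gcd x y : ℤ) = g at hg hx' hy'
  subst hx' hy'
  obtain ⟨z', rfl⟩ : g ^ 2 ∣ z := by
    rw [← Int.pow_dvd_pow_iff two_ne_zero, ← h]
    exact ⟨4 * x' ^ 4 + y' ^ 4, by ring⟩
  have hg0 : g ≠ 0 := by rintro h0; simp [h0] at hg
  have hsol : Solvable z' :=
    ⟨x', y', right_ne_zero_of_mul hx, right_ne_zero_of_mul hy,
      mul_left_cancel₀ (pow_ne_zero 4 hg0) (by linear_combination h)⟩
  refine ⟨z', hsol, Int.natAbs_lt_natAbs_mul ?_ hsol.ne_zero⟩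
  rw [Int.natAbs_pow]
  nlinarith

theorem exists_smaller_of_even {x y z : ℤ} (hx : x ≠ 0) (hy : y ≠ 0) (hye : Even y)
    (h : 4 * x ^ 4 + y ^ 4 = z ^ 2) :
    ∃ c, Solvable c ∧ c.natAbs < z.natAbs := by
  obtain ⟨y', rfl⟩ := hye.two_dvd
  obtain ⟨z', rfl⟩ : 2 ∣ z := by
    apply Int.Prime.dvd_pow' Nat.prime_two (k := 2)
    exact ⟨2 * x ^ 4 + 8 * y' ^ 4, by push_cast; linear_combination -h⟩
  have hsol : Solvable z' :=
    ⟨y', x, right_ne_zero_of_mul hy, hx,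
      mul_left_cancel₀ (four_ne_zero (α := ℤ)) (by linear_combination h)⟩
  exact ⟨z', hsol, Int.natAbs_lt_natAbs_mul le_rfl hsol.ne_zero⟩

theorem exists_sq_add_pow_four_eq_pow_four {x y z : ℤ} (hx : x ≠ 0) (hxy : IsCoprime x y)
    (hy : Odd y) (hz : 0 < z) (h : 4 * x ^ 4 + y ^ 4 = z ^ 2) :
    ∃ u v : ℤ, v ≠ 0 ∧ IsCoprime u v ∧ y ^ 2 + v ^ 4 = u ^ 4 ∧ u ^ 2 < z := by
  have hcop : IsCoprime (y ^ 2) (2 * x ^ 2) :=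
    (Int.isCoprime_two_right.mpr hy |>.mul_right hxy.symm.pow_right).pow_left
  have htriple : PythagoreanTriple (y ^ 2) (2 * x ^ 2) z := by
    unfold PythagoreanTriple; linear_combination h
  obtain ⟨m, n, hy2, hx2, hzmn, hmn, -, hm⟩ := htriple.coprime_classification'
    (Int.isCoprime_iff_gcd_eq_one.mp hcop) (Int.odd_iff.mp hy.pow) hz
  have hmn' : m * n = x ^ 2 := by linarith
  have hn : 0 < n := pos_of_mul_pos_right (hmn' ▸ by positivity) hm
  have hmn_cop : IsCoprime m n := Int.isCoprime_iff_gcd_eq_one.mpr hmn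
  obtain ⟨u, rfl⟩ := Int.exists_sq_of_isCoprime_of_nonneg hmn_cop hm hmn'
  obtain ⟨v, rfl⟩ := Int.exists_sq_of_isCoprime_of_nonneg hmn_cop.symm hn.le
    (by rw [mul_comm]; exact hmn')
  refine ⟨u, v, ?_, (IsCoprime.pow_iff two_pos two_pos).mp hmn_cop,
    by linear_combination hy2, ?_⟩
  · rintro rfl; simp at hn
  · calc u ^ 2 ≤ (u ^ 2) ^ 2 := Int.le_self_sq _
      _ < z := by rw [hzmn]; exact lt_add_of_pos_right _ (by positivity)

theorem exists_sq_add_sq_eq_four_mul_pow_four_add_pow_four {s t w : ℤ} (hst : IsCoprime s t)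
    (hs : 0 < s) (ht : 0 < t) (h : s * t = 2 * w ^ 2) :
    ∃ a b : ℤ, a ≠ 0 ∧ b ≠ 0 ∧ 4 * a ^ 4 + b ^ 4 = s ^ 2 + t ^ 2 := by
  wlog hse : Even s generalizing s t
  · have hte : Even t :=
      (Int.even_mul.mp (h ▸ even_two_mul _)).resolve_left hse
    obtain ⟨a, b, ha, hb, hab⟩ := this hst.symm ht hs (by rw [mul_comm]; exact h) hte
    exact ⟨a, b, ha, hb, by rw [hab, add_comm]⟩
  obtain ⟨r, rfl⟩ := hse.two_dvd
  have hr : 0 < r := by linarith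
  have hrt : r * t = w ^ 2 := mul_left_cancel₀ two_ne_zero (by linear_combination h)
  have hrt_cop : IsCoprime r t := hst.of_mul_left_right
  obtain ⟨a, rfl⟩ := Int.exists_sq_of_isCoprime_of_nonneg hrt_cop hr.le hrt
  obtain ⟨b, rfl⟩ := Int.exists_sq_of_isCoprime_of_nonneg hrt_cop.symm ht.le
    (by rw [mul_comm]; exact hrt)
  refine ⟨a, b, ?_, ?_, by ring⟩ <;> rintro rfl <;> simp_all

theorem solvable_of_sq_add_pow_four_eq_pow_four {y u v : ℤ} (hy : Odd y) (hv : v ≠ 0)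
    (huv : IsCoprime u v) (h : y ^ 2 + v ^ 4 = u ^ 4) : Solvable u := by
  have hyv : IsCoprime y v := by
    rw [← IsCoprime.pow_left_iff two_pos, show y ^ 2 = u ^ 4 + v * -v ^ 3 by linear_combination h]
    exact huv.pow_left.add_mul_left_left _
  have hu : 0 < u ^ 2 := by
    have : 0 < (u ^ 2) ^ 2 := by rw [← pow_mul, ← h]; positivity
    exact lt_of_le_of_ne (sq_nonneg u) (fun h0 => by simp [← h0] at this)
  have htriple : PythagoreanTriple y (v ^ 2) (u ^ 2) := by
    unfold PythagoreanTriple; linear_combination h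
  obtain ⟨s, t, -, hv2, hu2, hst, -, hs⟩ := htriple.coprime_classification'
    (Int.isCoprime_iff_gcd_eq_one.mp hyv.pow_right) (Int.odd_iff.mp hy) hu
  obtain ⟨w, rfl⟩ : 2 ∣ v :=
    Int.Prime.dvd_pow' Nat.prime_two (k := 2) ⟨s * t, by rw [hv2]; ring⟩
  have hstw : s * t = 2 * w ^ 2 := mul_left_cancel₀ two_ne_zero (by linear_combination -hv2)
  have hw : 0 < 2 * w ^ 2 := by have : w ≠ 0 := right_ne_zero_of_mul hv; positivity
  have hs' : 0 < s := lt_of_le_of_ne hs (by rintro rfl; linarith)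
  obtain ⟨a, b, ha, hb, hab⟩ := exists_sq_add_sq_eq_four_mul_pow_four_add_pow_four
    (Int.isCoprime_iff_gcd_eq_one.mpr hst) hs' (pos_of_mul_pos_right (hstw ▸ hw) hs) hstw
  exact ⟨a, b, ha, hb, hab.trans hu2.symm⟩

theorem exists_smaller_of_odd {x y z : ℤ} (hx : x ≠ 0) (hxy : IsCoprime x y) (hy : Odd y)
    (h : 4 * x ^ 4 + y ^ 4 = z ^ 2) :
    ∃ c, Solvable c ∧ c.natAbs < z.natAbs := by
  have hz : z ≠ 0 := Solvable.ne_zero ⟨x, y, hx, fun h0 => by simp [h0] at hy, h⟩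
  obtain ⟨u, v, hv, huv, hyuv, hlt⟩ := exists_sq_add_pow_four_eq_pow_four hx hxy hy
    (abs_pos.mpr hz) (by rw [sq_abs]; exact h)
  refine ⟨u, solvable_of_sq_add_pow_four_eq_pow_four hy hv huv hyuv, ?_⟩
  have := Int.natAbs_le_self_sq u
  rw [← Int.natCast_natAbs] at hlt
  omega

theorem exists_smaller {z : ℤ} (hz : Solvable z) : ∃ c, Solvable c ∧ c.natAbs < z.natAbs := by
  obtain ⟨x, y, hx, hy, h⟩ := hz
  by_cases hxy : IsCoprime x y
  · rcases Int.even_or_odd y with hye | hyo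
    · exact exists_smaller_of_even hx hy hye h
    · exact exists_smaller_of_odd hx hxy hyo h
  · exact exists_smaller_of_not_isCoprime hx hy hxy h

theorem not_solvable (z : ℤ) : ¬Solvable z := by
  induction hn : z.natAbs using Nat.strong_induction_on generalizing z with
  | _ n ih =>
    intro hz
    obtain ⟨c, hc, hlt⟩ := exists_smaller hz
    exact ih _ (hn ▸ hlt) c rfl hc

end QuarticDescent

theorem stmt_12 (x y : ℕ) (hx : 0 < x) (hy : 0 < y) :
    ¬ IsSquare (4 * x ^ 4 + y ^ 4) := by
  rintro ⟨r, hr⟩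
  refine QuarticDescent.not_solvable r ⟨x, y, by positivity, by positivity, ?_⟩
  rw [sq]
  exact_mod_cast hr
end

section
/- If a and b are positive integers with 2a⁴ + 2b⁴ a perfect square, then a = b. -/
/-!
From `2a⁴ + 2b⁴ = (2d)²` we get `a⁴ + b⁴ = 2d²`, and for `a > b` then `(ab)⁴ + e² = d⁴` with
`e = d² - b⁴`: a solution of `x⁴ - y⁴ = z²` in positive integers. By Fermat's right triangle
theorem there is none, which is proved by descent on `x`. After dividing out `gcd x y`, `x` is odd.
Odd coprime `p ≤ q` are `t - s` and `t + s` with `s, t` coprime, and `q² - p² = 4st`; when `st` is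
a square (fourth power), so are `s` and `t`. For odd `y`, applied to `y² ≤ x²`, this gives the
smaller solution `(√t, √s, xy)`. For even `y`, applied to `z ≤ x²`, it gives `x² = ρ⁴ + 4σ⁴`,
and applied once more to `ρ² ≤ x` the smaller solution `(t^(1/4), s^(1/4), ρ)`.
-/

theorem Nat.Coprime.exists_eq_pow_of_mul_eq_pow {a b c k : ℕ} (hab : a.Coprime b)
    (h : a * b = c ^ k) : ∃ d, a = d ^ k :=
  _root_.exists_eq_pow_of_mul_eq_pow (Nat.isUnit_iff.mpr hab) h

theorem Nat.exists_coprime_of_odd_of_le {p q : ℕ} (hp : Odd p) (hq : Odd q) (hpq : p ≤ q)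
    (hcop : p.Coprime q) : ∃ s t, s.Coprime t ∧ q = t + s ∧ t = p + s := by
  obtain ⟨s, hs⟩ := Nat.Odd.sub_odd hq hp
  have hq' : q = p + 2 * s := by omega
  refine ⟨s, p + s, ?_, by omega, rfl⟩
  rw [Nat.coprime_add_self_right]
  rw [hq', Nat.coprime_self_add_right] at hcop
  exact (hcop.coprime_dvd_right (dvd_mul_left s 2)).symm

theorem Nat.exists_eq_pow_four_add_four_mul_pow_four {A B Y : ℕ} (hAB : A.Coprime B)
    (hodd : Odd (A + B)) (hY : 0 < Y) (h : A * B = 4 * Y ^ 4) :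
    ∃ ρ σ, Odd ρ ∧ ρ.Coprime σ ∧ 0 < σ ∧ A + B = ρ ^ 4 + 4 * σ ^ 4 := by
  wlog hA : Even A generalizing A B
  · rw [add_comm] at hodd ⊢
    exact this hAB.symm hodd (by rwa [mul_comm])
      ((Nat.odd_add'.mp hodd).mp (Nat.not_even_iff_odd.mp hA))
  have hB : Odd B := (Nat.odd_add'.mp hodd).mpr hA
  have h4B : Nat.Coprime 4 B := by simpa using (Nat.coprime_two_left.mpr hB).pow_left 2
  obtain ⟨e, rfl⟩ := h4B.dvd_of_dvd_mul_right ⟨_, h⟩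
  have heB : e * B = Y ^ 4 := Nat.eq_of_mul_eq_mul_left four_pos (by rw [← h, mul_assoc])
  have hcop : e.Coprime B := hAB.coprime_dvd_left (dvd_mul_left e 4)
  obtain ⟨σ, rfl⟩ := hcop.exists_eq_pow_of_mul_eq_pow heB
  obtain ⟨ρ, rfl⟩ := hcop.symm.exists_eq_pow_of_mul_eq_pow ((mul_comm _ _).trans heB)
  refine ⟨ρ, σ, (odd_pow_iff four_ne_zero).mp hB, ?_, ?_, add_comm _ _⟩
  · simpa using hcop.symm
  · refine Nat.pos_of_ne_zero ?_
    rintro rfl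
    rw [zero_pow four_ne_zero, zero_mul] at heB
    have := pow_pos hY 4
    omega

def FermatRightTriangle (x y z : ℕ) : Prop :=
  0 < y ∧ 0 < z ∧ y ^ 4 + z ^ 2 = x ^ 4

namespace FermatRightTriangle

variable {x y z : ℕ}

theorem pos (h : FermatRightTriangle x y z) : 0 < x := by
  obtain ⟨hy, -, h⟩ := h
  have : 0 < x ^ 4 := h ▸ by positivity
  exact (Nat.pow_pos_iff.mp this).resolve_right four_ne_zero

theorem exists_lt_of_not_coprime (h : FermatRightTriangle x y z) (hxy : ¬x.Coprime y) :
    ∃ x' y' z', x' < x ∧ FermatRightTriangle x' y' z' := by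
  have hx := h.pos
  obtain ⟨g, x', y', hg, hxy', rfl, rfl⟩ := Nat.exists_coprime' (Nat.gcd_pos_of_pos_left y hx)
  have hg1 : g ≠ 1 := by
    rintro rfl
    simp_all
  obtain ⟨hy, hz, h⟩ := h
  have hgz : (g ^ 2) ^ 2 ∣ z ^ 2 := by
    rw [← pow_mul, ← Nat.dvd_add_right (pow_dvd_pow_of_dvd (dvd_mul_left g y') 4), h]
    exact pow_dvd_pow_of_dvd (dvd_mul_left g x') 4
  obtain ⟨z', rfl⟩ := (Nat.pow_dvd_pow_iff two_ne_zero).mp hgz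
  have hx' : 0 < x' := Nat.pos_of_mul_pos_right hx
  refine ⟨x', y', z', lt_mul_of_one_lt_right hx' (by omega), Nat.pos_of_mul_pos_right hy,
    Nat.pos_of_mul_pos_left hz, ?_⟩
  apply Nat.eq_of_mul_eq_mul_left (by positivity : 0 < g ^ 4)
  linear_combination h

theorem odd_of_coprime (h : FermatRightTriangle x y z) (hxy : x.Coprime y) : Odd x := by
  have mod_four : ∀ k m z : ZMod 4, (2 * m + 1) ^ 4 + z ^ 2 ≠ (k + k) ^ 4 := by decide
  by_contra hx
  obtain ⟨k, rfl⟩ := Nat.not_odd_iff_even.mp hx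
  obtain ⟨m, rfl⟩ : Odd y :=
    Nat.coprime_two_left.mp (hxy.coprime_dvd_left (even_iff_two_dvd.mp ⟨k, rfl⟩))
  exact mod_four k m z (by exact_mod_cast congrArg (Nat.cast : ℕ → ZMod 4) h.2.2)

theorem exists_lt_of_odd (h : FermatRightTriangle x y z) (hxy : x.Coprime y) (hy : Odd y) :
    ∃ x' y' z', x' < x ∧ FermatRightTriangle x' y' z' := by
  have hx := h.odd_of_coprime hxy
  obtain ⟨hy0, hz0, h⟩ := h
  have hle : y ^ 2 ≤ x ^ 2 := by
    refine (Nat.pow_le_pow_iff_left two_ne_zero).mp ?_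
    ring_nf
    omega
  obtain ⟨s, t, hst, hx2, rfl⟩ :=
    Nat.exists_coprime_of_odd_of_le hy.pow hx.pow hle (Nat.Coprime.pow 2 2 hxy.symm)
  have hz : z ^ 2 = 2 ^ 2 * (s * (y ^ 2 + s)) := by
    linear_combination h + (x ^ 2 + y ^ 2 + 2 * s) * hx2
  obtain ⟨w, rfl⟩ := (Nat.pow_dvd_pow_iff two_ne_zero).mp ⟨_, hz⟩
  have hw : s * (y ^ 2 + s) = w ^ 2 :=
    Nat.eq_of_mul_eq_mul_left four_pos (by linear_combination hz.symm)
  obtain ⟨α, rfl⟩ := hst.exists_eq_pow_of_mul_eq_pow hw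
  obtain ⟨β, hβ⟩ := hst.symm.exists_eq_pow_of_mul_eq_pow ((mul_comm _ _).trans hw)
  have hα : 0 < α := Nat.pos_of_ne_zero <| by
    rintro rfl
    rw [zero_pow two_ne_zero, zero_mul] at hw
    have := pow_pos (show 0 < w by omega) 2
    omega
  refine ⟨β, α, x * y, ?_, hα, Nat.mul_pos hx.pos hy0, ?_⟩
  · refine (Nat.pow_lt_pow_iff_left two_ne_zero).mp ?_
    have := pow_pos hα 2
    omega
  · linear_combination y ^ 2 * hx2 + (y ^ 2 + α ^ 2 + β ^ 2) * hβ

theorem exists_lt_of_sq_eq_pow_four_add_four_mul_pow_four {x ρ σ : ℕ} (hρ : Odd ρ)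
    (hρσ : ρ.Coprime σ) (hσ : 0 < σ) (h : x ^ 2 = ρ ^ 4 + 4 * σ ^ 4) :
    ∃ x' y', x' < x ∧ FermatRightTriangle x' y' ρ := by
  have hx : Odd x :=
    (Nat.odd_pow_iff two_ne_zero).mp (h ▸ hρ.pow.add_even ⟨2 * σ ^ 4, by ring⟩)
  have hcop : (ρ ^ 2).Coprime x := by
    have hρ4 : ρ.Coprime 4 := by simpa using (Nat.coprime_two_right.mpr hρ).pow_right 2
    have h4 : (ρ ^ 4).Coprime (4 * σ ^ 4) := (hρ4.mul_right (hρσ.pow_right 4)).pow_left 4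
    rw [← Nat.coprime_self_add_right, ← h, show ρ ^ 4 = (ρ ^ 2) ^ 2 by ring] at h4
    simpa using h4
  have hle : ρ ^ 2 ≤ x := by
    refine (Nat.pow_le_pow_iff_left two_ne_zero).mp ?_
    ring_nf
    omega
  obtain ⟨s, t, hst, hxst, rfl⟩ := Nat.exists_coprime_of_odd_of_le hρ.pow hx hle hcop
  have hsσ : s * (ρ ^ 2 + s) = σ ^ 4 :=
    Nat.eq_of_mul_eq_mul_left four_pos (by subst hxst; linear_combination h)
  obtain ⟨u, rfl⟩ := hst.exists_eq_pow_of_mul_eq_pow hsσ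
  obtain ⟨v, hv⟩ := hst.symm.exists_eq_pow_of_mul_eq_pow ((mul_comm _ _).trans hsσ)
  have hu : 0 < u := Nat.pos_of_ne_zero <| by
    rintro rfl
    rw [zero_pow four_ne_zero, zero_mul] at hsσ
    have := pow_pos hσ 4
    omega
  refine ⟨v, u, ?_, hu, hρ.pos, by omega⟩
  have := pow_pos hu 4
  have := Nat.le_self_pow four_ne_zero v
  omega

theorem exists_lt_of_even (h : FermatRightTriangle x y z) (hxy : x.Coprime y) (hy : Even y) :
    ∃ x' y' z', x' < x ∧ FermatRightTriangle x' y' z' := by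
  have hx := h.odd_of_coprime hxy
  obtain ⟨hy0, -, h⟩ := h
  have hz : Odd z := (Nat.odd_pow_iff two_ne_zero).mp
    ((Nat.odd_add'.mp (h ▸ hx.pow)).mpr (hy.pow_of_ne_zero four_ne_zero))
  have hcop : z.Coprime (x ^ 2) := by
    have h4 : (z ^ 2).Coprime ((x ^ 2) ^ 2) := by
      rw [show (x ^ 2) ^ 2 = x ^ 4 by ring, ← h, Nat.coprime_add_self_right]
      exact (Nat.coprime_self_add_right.mp (h ▸ Nat.Coprime.pow 4 4 hxy.symm)).symm
    simpa using h4
  have hle : z ≤ x ^ 2 := by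
    refine (Nat.pow_le_pow_iff_left two_ne_zero).mp ?_
    ring_nf
    omega
  obtain ⟨A, B, hAB, hx2, rfl⟩ := Nat.exists_coprime_of_odd_of_le hz hx.pow hle hcop
  obtain ⟨Y, rfl⟩ := even_iff_two_dvd.mp hy
  have hY : A * (z + A) = 4 * Y ^ 4 :=
    Nat.eq_of_mul_eq_mul_left four_pos
      (by linear_combination h.symm - (x ^ 2 + z + 2 * A) * hx2)
  obtain ⟨ρ, σ, hρ, hρσ, hσ, hsum⟩ := Nat.exists_eq_pow_four_add_four_mul_pow_four hAB
    (by rw [add_comm, ← hx2]; exact hx.pow) (by omega) hY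
  obtain ⟨x', y', hlt, h'⟩ :=
    exists_lt_of_sq_eq_pow_four_add_four_mul_pow_four (x := x) hρ hρσ hσ (by omega)
  exact ⟨x', y', ρ, hlt, h'⟩

theorem exists_lt (h : FermatRightTriangle x y z) :
    ∃ x' y' z', x' < x ∧ FermatRightTriangle x' y' z' := by
  by_cases hxy : x.Coprime y
  · rcases Nat.even_or_odd y with hy | hy
    · exact h.exists_lt_of_even hxy hy
    · exact h.exists_lt_of_odd hxy hy
  · exact h.exists_lt_of_not_coprime hxy

end FermatRightTriangle

theorem not_fermatRightTriangle (x y z : ℕ) : ¬FermatRightTriangle x y z := by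
  induction x using Nat.strong_induction_on generalizing y z with
  | _ x ih =>
    intro h
    obtain ⟨x', y', z', hlt, h'⟩ := h.exists_lt
    exact ih x' hlt y' z' h'

theorem eq_of_pow_four_add_pow_four_eq_two_mul_sq {a b d : ℕ} (ha : 0 < a) (hb : 0 < b)
    (h : a ^ 4 + b ^ 4 = 2 * d ^ 2) : a = b := by
  wlog hba : b < a generalizing a b
  · rcases (not_lt.mp hba).lt_or_eq with hab | hab
    · exact (this hb ha (by rwa [add_comm]) hab).symm
    · exact hab
  have hlt : b ^ 4 < a ^ 4 := Nat.pow_lt_pow_left hba four_ne_zero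
  obtain ⟨e, hd⟩ : ∃ e, d ^ 2 = b ^ 4 + e := ⟨d ^ 2 - b ^ 4, by omega⟩
  have ha4 : a ^ 4 = b ^ 4 + 2 * e := by omega
  refine absurd ⟨Nat.mul_pos ha hb, by omega, ?_⟩ (not_fermatRightTriangle d (a * b) e)
  linear_combination b ^ 4 * ha4 - (d ^ 2 + b ^ 4 + e) * hd

theorem stmt_13 (a b : ℕ) (ha : 0 < a) (hb : 0 < b)
    (hsq : IsSquare (2 * a ^ 4 + 2 * b ^ 4)) : a = b := by
  obtain ⟨c, hc⟩ := hsq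
  obtain ⟨d, rfl⟩ : Even c :=
    (Nat.even_mul.mp ⟨a ^ 4 + b ^ 4, by rw [← hc]; ring⟩).elim id id
  exact eq_of_pow_four_add_pow_four_eq_two_mul_sq (d := d) ha hb
    (Nat.eq_of_mul_eq_mul_left two_pos (by linear_combination hc))
end

section
/- There are no positive integers a > b such that 2a⁴ - 2b⁴ is a perfect square. -/
theorem stmt_14 : ¬ ∃ a b c : ℤ, 0 < b ∧ b < a ∧ 0 < c ∧
    2 * a ^ 4 - 2 * b ^ 4 = c ^ 2 := by
  rintro ⟨a, b, c, hb, hab, hc, h⟩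
  have h2c : (2 : ℤ) ∣ c := by
    have : (2 : ℤ) ∣ c ^ 2 := ⟨a ^ 4 - b ^ 4, by linarith⟩
    exact (Int.Prime.dvd_pow' Nat.prime_two this)
  obtain ⟨d, rfl⟩ := h2c
  have ha : 0 < a := hb.trans hab
  have hd : d ≠ 0 := by
    rintro rfl
    nlinarith [pow_lt_pow_left₀ hab hb.le (by norm_num : (4:ℕ) ≠ 0)]
  have hab0 : a * b ≠ 0 := by positivity
  have h2 : a ^ 4 - b ^ 4 = 2 * d ^ 2 := by nlinarith
  have key : d ^ 4 + (a * b) ^ 4 = (d ^ 2 + b ^ 4) ^ 2 := by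
    linear_combination b ^ 4 * h2
  exact not_fermat_42 hd hab0 key
end

section
/- For positive integers a, b, the expression a⁴ + 6a²b² + b⁴ is never a perfect square. -/
/-!
For `a² ≠ b²`, `(a² + b²)⁴ - (2ab)⁴ = (a² - b²)² (a⁴ + 6a²b² + b⁴)`, so a square value would give
a nontrivial solution of `x⁴ - y⁴ = z²`. Fermat's descent rules these out: for a primitive
solution, parametrising the Pythagorean triple `(y², z, x²)` (`y` odd) directly, or `(z, y², x²)`
(`y` even) followed by the triple `(d², 2i², x)` with `x² = d⁴ + 4i⁴`, yields a solution with
smaller `|x|`. For `a² = b²` the value is `8a⁴ = 2(2a²)²`, and `2` is not a rational square.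
-/

theorem Int.exists_sq_of_isCoprime_of_mul_eq_sq {p q u : ℤ} (hpq : IsCoprime p q)
    (hp : 0 < p) (h : p * q = u ^ 2) : ∃ r, p = r ^ 2 := by
  obtain ⟨r, hr | hr⟩ := Int.sq_of_isCoprime hpq h
  · exact ⟨r, hr⟩
  · nlinarith [sq_nonneg r]

theorem Int.exists_eq_two_mul_sq_of_two_mul_mul_eq_sq {m n y : ℤ} (hmn : IsCoprime m n)
    (hm : 0 < m) (hn : 0 < n) (hm2 : 2 ∣ m) (h : 2 * m * n = y ^ 2) :
    ∃ i d, m = 2 * i ^ 2 ∧ n = d ^ 2 := by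
  obtain ⟨m', rfl⟩ := hm2
  obtain ⟨y', rfl⟩ : 2 ∣ y :=
    Int.prime_two.dvd_of_dvd_pow (n := 2) ⟨m' * 2 * n, by linear_combination -h⟩
  have h' : m' * n = y' ^ 2 := by linarith
  obtain ⟨i, rfl⟩ := Int.exists_sq_of_isCoprime_of_mul_eq_sq hmn.of_mul_left_right (by omega) h'
  obtain ⟨d, rfl⟩ := Int.exists_sq_of_isCoprime_of_mul_eq_sq hmn.of_mul_left_right.symm hn
    (u := y') (by linear_combination h')
  exact ⟨i, d, rfl, rfl⟩

theorem PythagoreanTriple.exists_fourth_pow_of_two_mul_sq {a u c : ℤ}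
    (h : PythagoreanTriple a (2 * u ^ 2) c) (hcop : Int.gcd a (2 * u ^ 2) = 1)
    (ha : a % 2 = 1) (hu : u ≠ 0) (hc : 0 < c) :
    ∃ r s, s ≠ 0 ∧ a = r ^ 4 - s ^ 4 ∧ c = r ^ 4 + s ^ 4 := by
  obtain ⟨m, n, rfl, hmn2, rfl, hmn, -, hm⟩ := h.coprime_classification' hcop ha hc
  rw [← Int.isCoprime_iff_gcd_eq_one] at hmn
  have hmn_sq : m * n = u ^ 2 := by linarith
  have hu2 : 0 < m * n := hmn_sq ▸ by positivity
  have hm : 0 < m := lt_of_le_of_ne hm (by rintro rfl; simp at hu2)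
  obtain ⟨r, rfl⟩ := Int.exists_sq_of_isCoprime_of_mul_eq_sq hmn hm hmn_sq
  obtain ⟨s, rfl⟩ := Int.exists_sq_of_isCoprime_of_mul_eq_sq hmn.symm
    (pos_of_mul_pos_right hu2 hm.le) (u := u) (by linear_combination hmn_sq)
  exact ⟨r, s, by rintro rfl; simp at hu2, by ring, by ring⟩

def QuarticDiffSq (x y z : ℤ) : Prop :=
  y ≠ 0 ∧ z ≠ 0 ∧ x ^ 4 = y ^ 4 + z ^ 2

namespace QuarticDiffSq

theorem ne_zero {x y z : ℤ} (h : QuarticDiffSq x y z) : x ≠ 0 := by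
  obtain ⟨hy, -, heq⟩ := h
  rintro rfl
  have : 0 < y ^ 4 + z ^ 2 := by positivity
  simp_all

theorem exists_isCoprime {x y z : ℤ} (h : QuarticDiffSq x y z) :
    ∃ x' y' z', QuarticDiffSq x' y' z' ∧ IsCoprime x' y' ∧ x'.natAbs ≤ x.natAbs := by
  obtain ⟨hy, hz, heq⟩ := h
  obtain ⟨g, x', y', hg, hxy', rfl, rfl⟩ :=
    Int.exists_gcd_one' (Int.gcd_pos_of_ne_zero_right x hy)
  have hg4 : ((g : ℤ) ^ 2) ^ 2 ∣ z ^ 2 := ⟨x' ^ 4 - y' ^ 4, by linear_combination -heq⟩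
  obtain ⟨z', rfl⟩ := (Int.pow_dvd_pow_iff two_ne_zero).mp hg4
  have hg0 : (g : ℤ) ^ 4 ≠ 0 := by positivity
  refine ⟨x', y', z', ⟨by rintro rfl; simp at hy, by rintro rfl; simp at hz, ?_⟩,
    Int.isCoprime_iff_gcd_eq_one.mpr hxy', ?_⟩
  · exact mul_left_cancel₀ hg0 (by linear_combination heq)
  · rw [Int.natAbs_mul]
    exact Nat.le_mul_of_pos_right _ (by simpa using hg)

theorem isCoprime_sq_left {x y z : ℤ} (h : QuarticDiffSq x y z) (hxy : IsCoprime x y) :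
    IsCoprime (y ^ 2) z := by
  have h4 : IsCoprime ((y ^ 2) ^ 2) (z ^ 2) := by
    rw [← pow_mul, show z ^ 2 = x ^ 4 + y ^ 4 * (-1) by linear_combination -h.2.2]
    exact hxy.symm.pow.add_mul_left_right _
  exact IsCoprime.pow_iff two_pos two_pos |>.mp h4

theorem exists_natAbs_lt_of_odd {x y z : ℤ} (h : QuarticDiffSq x y z)
    (hyz : IsCoprime (y ^ 2) z) (hy : y % 2 = 1) :
    ∃ x' y' z', QuarticDiffSq x' y' z' ∧ x'.natAbs < x.natAbs := by
  have hx := h.ne_zero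
  obtain ⟨hy0, hz0, heq⟩ := h
  have ht : PythagoreanTriple (y ^ 2) z (x ^ 2) := by
    unfold PythagoreanTriple; linear_combination -heq
  obtain ⟨m, n, hy2, rfl, hx2, -, -, -⟩ := ht.coprime_classification'
    (Int.isCoprime_iff_gcd_eq_one.mp hyz) (by rw [sq, Int.mul_emod, hy]; rfl) (by positivity)
  have hn : n ≠ 0 := by rintro rfl; simp at hz0
  refine ⟨m, n, x * y, ⟨hn, mul_ne_zero hx hy0, ?_⟩, ?_⟩
  · linear_combination -x ^ 2 * hy2 - (m ^ 2 - n ^ 2) * hx2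
  · rw [Int.natAbs_lt_iff_sq_lt, hx2]
    exact lt_add_of_pos_right _ (by positivity)

theorem exists_natAbs_lt_of_sq_eq_fourth_pow_add_four_mul_fourth_pow {x i d : ℤ}
    (hx : x ^ 2 = d ^ 4 + 4 * i ^ 4) (hcop : IsCoprime (d ^ 2) (2 * i ^ 2))
    (hd : d ^ 2 % 2 = 1) (hi : i ≠ 0) :
    ∃ x' y' z', QuarticDiffSq x' y' z' ∧ x'.natAbs < x.natAbs := by
  have ht : PythagoreanTriple (d ^ 2) (2 * i ^ 2) |x| := by
    unfold PythagoreanTriple; rw [abs_mul_abs_self]; linear_combination -hx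
  have hx0 : 0 < |x| :=
    abs_pos.mpr <| by rintro rfl; nlinarith [pow_pos (sq_pos_of_ne_zero hi) 2]
  obtain ⟨r, s, hs, hd2, hrs⟩ := ht.exists_fourth_pow_of_two_mul_sq
    (Int.isCoprime_iff_gcd_eq_one.mp hcop) hd hi hx0
  refine ⟨r, s, d, ⟨hs, by rintro rfl; simp at hd, by linear_combination -hd2⟩, ?_⟩
  rw [← Int.natAbs_abs x, Int.natAbs_lt_iff_sq_lt, hrs]
  nlinarith [pow_pos (pow_pos (sq_pos_of_ne_zero hs) 2) 2, sq_nonneg (r ^ 2 - 1), sq_nonneg r]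

theorem exists_natAbs_lt_of_even {x y z : ℤ} (h : QuarticDiffSq x y z)
    (hyz : IsCoprime (y ^ 2) z) (hy : 2 ∣ y) :
    ∃ x' y' z', QuarticDiffSq x' y' z' ∧ x'.natAbs < x.natAbs := by
  have hx := h.ne_zero
  obtain ⟨hy0, -, heq⟩ := h
  have hz : z % 2 = 1 := by
    have : ¬ 2 ∣ z := fun hz ↦ by
      simpa [Int.isUnit_iff] using hyz.isUnit_of_dvd' (dvd_pow hy two_ne_zero) hz
    omega
  have ht : PythagoreanTriple z (y ^ 2) (x ^ 2) := by
    unfold PythagoreanTriple; linear_combination -heq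
  obtain ⟨m, n, -, hy2, hx2, hmn, hpar, hm⟩ := ht.coprime_classification'
    (Int.isCoprime_iff_gcd_eq_one.mp hyz.symm) hz (by positivity)
  rw [← Int.isCoprime_iff_gcd_eq_one] at hmn
  have hmn0 : 0 < m * n := by nlinarith [pow_pos (sq_pos_of_ne_zero hy0) 2]
  have hm0 : 0 < m := lt_of_le_of_ne hm (by rintro rfl; simp at hmn0)
  have hn0 : 0 < n := pos_of_mul_pos_right hmn0 hm
  rcases hpar with ⟨hm2, hn2⟩ | ⟨hm2, hn2⟩
  · obtain ⟨i, d, rfl, rfl⟩ := Int.exists_eq_two_mul_sq_of_two_mul_mul_eq_sq hmn hm0 hn0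
      (Int.dvd_of_emod_eq_zero hm2) hy2.symm
    exact exists_natAbs_lt_of_sq_eq_fourth_pow_add_four_mul_fourth_pow
      (by linear_combination hx2) hmn.symm hn2 fun hi ↦ by simp [hi] at hm0
  · obtain ⟨i, d, rfl, rfl⟩ := Int.exists_eq_two_mul_sq_of_two_mul_mul_eq_sq hmn.symm hn0 hm0
      (Int.dvd_of_emod_eq_zero hn2) (y := y) (by linear_combination -hy2)
    exact exists_natAbs_lt_of_sq_eq_fourth_pow_add_four_mul_fourth_pow
      (by linear_combination hx2) hmn hm2 fun hi ↦ by simp [hi] at hn0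

theorem exists_natAbs_lt {x y z : ℤ} (h : QuarticDiffSq x y z) :
    ∃ x' y' z', QuarticDiffSq x' y' z' ∧ x'.natAbs < x.natAbs := by
  obtain ⟨x₁, y₁, z₁, h₁, hxy₁, hle⟩ := h.exists_isCoprime
  suffices ∃ x' y' z', QuarticDiffSq x' y' z' ∧ x'.natAbs < x₁.natAbs by
    obtain ⟨x', y', z', h', hlt⟩ := this
    exact ⟨x', y', z', h', hlt.trans_le hle⟩
  rcases Int.emod_two_eq y₁ with hy | hy
  · exact h₁.exists_natAbs_lt_of_even (h₁.isCoprime_sq_left hxy₁) (Int.dvd_of_emod_eq_zero hy)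
  · exact h₁.exists_natAbs_lt_of_odd (h₁.isCoprime_sq_left hxy₁) hy

end QuarticDiffSq

theorem not_quarticDiffSq (x y z : ℤ) : ¬ QuarticDiffSq x y z := by
  induction hn : x.natAbs using Nat.strong_induction_on generalizing x y z with
  | _ n ih =>
    intro h
    obtain ⟨x', y', z', h', hlt⟩ := h.exists_natAbs_lt
    exact ih _ (hn ▸ hlt) x' y' z' rfl h'

theorem Int.fourth_pow_add_six_mul_sq_mul_sq_add_fourth_pow_ne_sq {a b c : ℤ} (ha : a ≠ 0)
    (hb : b ≠ 0) : a ^ 4 + 6 * a ^ 2 * b ^ 2 + b ^ 4 ≠ c ^ 2 := by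
  intro h
  have hc : c ≠ 0 := by
    rintro rfl
    have : 0 < a ^ 4 + 6 * a ^ 2 * b ^ 2 + b ^ 4 := by positivity
    simp_all
  by_cases hab : a ^ 2 = b ^ 2
  · have : IsSquare (2 : ℚ) := ⟨c / (2 * a ^ 2), by
      field_simp
      exact_mod_cast (by linear_combination h + (7 * a ^ 2 + b ^ 2) * hab : 8 * a ^ 4 = c ^ 2)⟩
    norm_num at this
  · exact not_quarticDiffSq (a ^ 2 + b ^ 2) (2 * a * b) (c * (a ^ 2 - b ^ 2))
      ⟨by simp [ha, hb], mul_ne_zero hc (sub_ne_zero.mpr hab),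
        by linear_combination (a ^ 2 - b ^ 2) ^ 2 * h⟩

theorem stmt_16 (a b : ℕ) (ha : 0 < a) (hb : 0 < b) :
    ¬ IsSquare (a ^ 4 + 6 * a ^ 2 * b ^ 2 + b ^ 4) := by
  rintro ⟨c, hc⟩
  apply Int.fourth_pow_add_six_mul_sq_mul_sq_add_fourth_pow_ne_sq (a := a) (b := b) (c := c)
    (by positivity) (by positivity)
  exact_mod_cast hc.trans (sq c).symm
end
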